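/- For a connected simple graph G, the Randić energy of each vertex admits the convergent series representation RE_G(v_i) = Σ_{k=0}^∞ C(1/2, k) ((R(G)^2 − I)^k)_{ii}, where C(1/2,k) is the generalized binomial coefficient. -/

import Mathlib

open Matrix BigOperators Finset
open scoped Classical

/-- `M * Mᴴ` is positive semidefinite. -/
theorem mulConjTranspose_posSemidef {V : Type*} [Fintype V] [DecidableEq V]
    (M : Matrix V V ℝ) : (M * Mᴴ).PosSemidef := by
  simpa using Matrix.posSemidef_conjTranspose_mul_self Mᴴ

/-- The square root of a positive semidefinite matrix (as defined in the older Mathlib). -/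
noncomputable def Matrix.PosSemidef.sqrt {n : Type*} [Fintype n] [DecidableEq n]
    {A : Matrix n n ℝ} (hA : A.PosSemidef) : Matrix n n ℝ :=
  hA.1.eigenvectorUnitary.1 * diagonal ((√·) ∘ hA.1.eigenvalues) *
    (star hA.1.eigenvectorUnitary : Matrix n n ℝ)

/-- The absolute value `|M| = (M M*)^(1/2)` of a matrix. -/
noncomputable def matAbs {V : Type*} [Fintype V] [DecidableEq V]
    (M : Matrix V V ℝ) : Matrix V V ℝ :=
  (mulConjTranspose_posSemidef M).sqrt

/-- The Randić matrix of a simple graph. -/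
noncomputable def randicMatrix {V : Type*} [Fintype V] [DecidableEq V]
    (G : SimpleGraph V) : Matrix V V ℝ :=
  Matrix.of fun i j =>
    if G.Adj i j then 1 / Real.sqrt ((G.degree i : ℝ) * (G.degree j : ℝ)) else 0

/-- The Randić energy of a vertex: `RE_G(v) = |R(G)|_{vv}`. -/
noncomputable def vertexRE {V : Type*} [Fintype V] [DecidableEq V]
    (G : SimpleGraph V) (i : V) : ℝ :=
  matAbs (randicMatrix G) i i

/-- Generalized binomial coefficient `C(α, k)`. -/
noncomputable def genBinom (α : ℝ) (k : ℕ) : ℝ :=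
  (∏ j ∈ Finset.range k, (α - j)) / (Nat.factorial k : ℝ)

lemma genBinom_zero (α : ℝ) : genBinom α 0 = 1 := by simp [genBinom]

lemma genBinom_succ (α : ℝ) (k : ℕ) :
    genBinom α (k + 1) = genBinom α k * (α - k) / (k + 1) := by
  have hk : (Nat.factorial k : ℝ) ≠ 0 := Nat.cast_ne_zero.mpr (Nat.factorial_ne_zero k)
  have hk1 : ((k : ℝ) + 1) ≠ 0 := by positivity
  have hfac : ((k+1).factorial : ℝ) = ((k:ℝ) + 1) * (k.factorial : ℝ) := by
    rw [Nat.factorial_succ]; push_cast; ring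
  rw [genBinom, genBinom, Finset.prod_range_succ, hfac, div_mul_eq_mul_div, div_div,
    mul_comm ((k:ℝ)+1)]

/-- `bSeq n = binom(2n,n)/4^n`, defined recursively. -/
noncomputable def bSeq : ℕ → ℝ
  | 0 => 1
  | n + 1 => bSeq n * (2 * n + 1) / (2 * n + 2)

lemma bSeq_pos : ∀ n, 0 < bSeq n
  | 0 => one_pos
  | n + 1 => by
      have := bSeq_pos n
      have h1 : (0:ℝ) < 2 * n + 1 := by positivity
      have h2 : (0:ℝ) < 2 * n + 2 := by positivity
      unfold bSeq
      positivity

lemma genBinom_half_succ (n : ℕ) :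
    genBinom (1/2) (n + 1) * (-1 : ℝ) ^ n * (2 * n + 2) = bSeq n := by
  induction n with
  | zero => norm_num [genBinom_succ, genBinom_zero, bSeq]
  | succ n ih =>
      have h2 : ((n:ℝ) + 2) ≠ 0 := by positivity
      rw [genBinom_succ (1/2) (n+1),
        show bSeq (n+1) = bSeq n * (2 * n + 1) / (2 * n + 2) from rfl, ← ih]
      push_cast
      field_simp
      ring

lemma partial_sum_alt (n : ℕ) :
    ∑ k ∈ Finset.range (n + 1), genBinom (1/2) k * (-1 : ℝ) ^ k = bSeq n := by
  induction n with
  | zero => simp [genBinom_zero, bSeq]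
  | succ n ih =>
      rw [Finset.sum_range_succ, ih]
      have h := genBinom_half_succ n
      have h2 : (2 * (n:ℝ) + 2) ≠ 0 := by positivity
      have hc : genBinom (1/2) (n+1) * (-1:ℝ)^(n+1) = - (bSeq n / (2*n+2)) := by
        rw [← h]; field_simp; ring
      rw [hc, show bSeq (n+1) = bSeq n * (2 * n + 1) / (2 * n + 2) from rfl]
      field_simp
      ring

lemma abs_genBinom_half_succ (n : ℕ) :
    |genBinom (1/2) (n + 1)| = bSeq n / (2 * n + 2) := by
  have h := genBinom_half_succ n
  have h2 : (0:ℝ) < 2 * (n:ℝ) + 2 := by positivity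
  have : genBinom (1/2) (n+1) * (-1:ℝ)^n = bSeq n / (2*n+2) := by
    field_simp at h ⊢; linarith [h]
  calc |genBinom (1/2) (n + 1)| = |genBinom (1/2) (n+1) * (-1:ℝ)^n| := by
        rw [abs_mul, abs_pow, abs_neg, abs_one, one_pow, mul_one]
    _ = bSeq n / (2 * n + 2) := by rw [this]; exact abs_of_pos (div_pos (bSeq_pos n) (by positivity))

lemma partial_sum_abs_tail (n : ℕ) :
    ∑ k ∈ Finset.range n, |genBinom (1/2) (k + 1)| = 1 - bSeq n := by
  induction n with
  | zero => simp [bSeq]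
  | succ n ih =>
      rw [Finset.sum_range_succ, ih, abs_genBinom_half_succ,
        show bSeq (n+1) = bSeq n * (2 * n + 1) / (2 * n + 2) from rfl]
      have h2 : (2 * (n:ℝ) + 2) ≠ 0 := by positivity
      field_simp
      ring

lemma summable_abs_genBinom_half : Summable (fun k => |genBinom (1/2) k|) := by
  apply summable_of_sum_range_le (c := 2) (fun k => abs_nonneg _)
  intro n
  cases n with
  | zero => norm_num
  | succ n =>
      rw [Finset.sum_range_succ' (fun k => |genBinom (1/2) k|) n]
      rw [partial_sum_abs_tail n, genBinom_zero]
      have := (bSeq_pos n).le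
      simp only [abs_one]
      linarith

lemma tsum_abs_genBinom_tail_le : ∑' k : ℕ, |genBinom (1/2) (k + 1)| ≤ 1 := by
  apply Real.tsum_le_of_sum_range_le (fun k => abs_nonneg _)
  intro n
  rw [partial_sum_abs_tail n]
  linarith [(bSeq_pos n).le]

noncomputable def convT (k : ℕ) : ℝ :=
  ∑ i ∈ Finset.range (k+1), genBinom (1/2) i * genBinom (1/2) (k - i)

lemma reflect_sum (k : ℕ) (f : ℕ → ℕ → ℝ) :
    ∑ i ∈ Finset.range (k+1), f i (k-i) = ∑ i ∈ Finset.range (k+1), f (k-i) i := by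
  rw [← Finset.sum_range_reflect (fun i => f i (k - i)) (k+1)]
  apply Finset.sum_congr rfl
  intro j hj
  have hj' : j ≤ k := Nat.lt_succ_iff.mp (Finset.mem_range.mp hj)
  simp only [Nat.add_sub_cancel]
  rw [Nat.sub_sub_self hj']

lemma convT_rec (k : ℕ) : ((k:ℝ) + 1) * convT (k+1) = (1 - k) * convT k := by
  set c := genBinom (1/2) with hc
  have key : ∀ m : ℕ, (m:ℝ) * convT m
      = 2 * ∑ i ∈ Finset.range (m+1), (i:ℝ) * (c i * c (m - i)) := by
    intro m
    have h1 : (m:ℝ) * convT m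
        = ∑ i ∈ Finset.range (m+1), ((i:ℝ) + ((m - i : ℕ):ℝ)) * (c i * c (m - i)) := by
      rw [convT, Finset.mul_sum]
      apply Finset.sum_congr rfl
      intro i hi
      have hi' : i ≤ m := Nat.lt_succ_iff.mp (Finset.mem_range.mp hi)
      rw [Nat.cast_sub hi']
      ring
    have h2 : ∑ i ∈ Finset.range (m+1), ((m - i : ℕ):ℝ) * (c i * c (m - i))
        = ∑ i ∈ Finset.range (m+1), (i:ℝ) * (c i * c (m - i)) := by
      have := reflect_sum m (fun a b => ((b:ℕ):ℝ) * (c a * c b))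
      simpa [mul_comm] using this
    rw [h1]
    rw [show (∑ i ∈ Finset.range (m+1), ((i:ℝ) + ((m - i : ℕ):ℝ)) * (c i * c (m - i)))
        = (∑ i ∈ Finset.range (m+1), (i:ℝ) * (c i * c (m - i)))
          + ∑ i ∈ Finset.range (m+1), ((m - i : ℕ):ℝ) * (c i * c (m - i)) by
      rw [← Finset.sum_add_distrib]; apply Finset.sum_congr rfl; intros; ring]
    rw [h2]; ring
  have hA : ∑ i ∈ Finset.range (k+2), (i:ℝ) * (c i * c (k + 1 - i))
      = ∑ i ∈ Finset.range (k+1), (1/2 - (i:ℝ)) * (c i * c (k - i)) := by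
    rw [Finset.sum_range_succ' (fun i => (i:ℝ) * (c i * c (k + 1 - i))) (k+1)]
    simp only [Nat.cast_zero, zero_mul, add_zero, Nat.cast_succ]
    apply Finset.sum_congr rfl
    intro i hi
    have hrec : c (i+1) = c i * (1/2 - i) / (i + 1) := genBinom_succ (1/2) i
    have hne : ((i:ℝ) + 1) ≠ 0 := by positivity
    have hsub : k + 1 - (i + 1) = k - i := by omega
    rw [hsub, hrec]
    field_simp
  have hk2 : ((k:ℝ) + 1) * convT (k+1) = 2 * ∑ i ∈ Finset.range (k+2),
      (i:ℝ) * (c i * c (k + 1 - i)) := by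
    have := key (k+1); push_cast at this ⊢; convert this using 2
  have hsplit : 2 * ∑ i ∈ Finset.range (k+1), (1/2 - (i:ℝ)) * (c i * c (k - i))
      = convT k - (k:ℝ) * convT k := by
    rw [key k, convT, Finset.mul_sum, Finset.mul_sum, ← Finset.sum_sub_distrib]
    apply Finset.sum_congr rfl; intros; ring
  rw [hk2, hA, hsplit]; ring

lemma convT_zero : convT 0 = 1 := by simp [convT, genBinom_zero]

lemma convT_one : convT 1 = 1 := by
  have h := convT_rec 0
  rw [convT_zero] at h
  norm_num at h
  exact h

lemma convT_ge_two (k : ℕ) (hk : 2 ≤ k) : convT k = 0 := by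
  induction k with
  | zero => omega
  | succ k ih =>
      have h := convT_rec k
      rcases Nat.lt_or_ge k 2 with hk2 | hk2
      · interval_cases k
        · omega
        · rw [convT_one] at h
          norm_num at h
          linarith
      · rw [ih hk2] at h
        have hne : ((k:ℝ) + 1) ≠ 0 := by positivity
        have hne2 : convT (k+1) = 0 := by
          have := mul_eq_zero.mp (by linarith [h] : ((k:ℝ)+1) * convT (k+1) = 0)
          tauto
        exact hne2

set_option maxHeartbeats 800000 in
theorem hasSum_genBinom_half {x : ℝ} (h1 : -1 ≤ x) (h0 : x ≤ 0) :
    HasSum (fun k => genBinom (1/2) k * x ^ k) (Real.sqrt (1 + x)) := by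
  have hxabs : |x| ≤ 1 := abs_le.mpr ⟨h1, h0.trans zero_le_one⟩
  have hbound : ∀ k, ‖genBinom (1/2) k * x ^ k‖ ≤ |genBinom (1/2) k| := by
    intro k
    rw [Real.norm_eq_abs, abs_mul, abs_pow]
    exact mul_le_of_le_one_right (abs_nonneg _) (pow_le_one₀ (abs_nonneg _) hxabs)
  have hnorm : Summable (fun k => ‖genBinom (1/2) k * x ^ k‖) :=
    summable_abs_genBinom_half.of_nonneg_of_le (fun k => norm_nonneg _) hbound
  have hs : Summable (fun k => genBinom (1/2) k * x ^ k) := hnorm.of_norm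
  set f := ∑' k : ℕ, genBinom (1/2) k * x ^ k with hf
  -- Cauchy product : f * f = 1 + x
  have hcauchy : f * f = 1 + x := by
    rw [hf, tsum_mul_tsum_eq_tsum_sum_antidiagonal_of_summable_norm hnorm hnorm]
    have heq : ∀ n : ℕ, (∑ kl ∈ Finset.HasAntidiagonal.antidiagonal n,
        (genBinom (1/2) kl.1 * x ^ kl.1) * (genBinom (1/2) kl.2 * x ^ kl.2))
        = convT n * x ^ n := by
      intro n
      rw [Finset.Nat.sum_antidiagonal_eq_sum_range_succ_mk, convT, Finset.sum_mul]
      apply Finset.sum_congr rfl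
      intro i hi
      have hi' : i ≤ n := Nat.lt_succ_iff.mp (Finset.mem_range.mp hi)
      show genBinom (1/2) i * x ^ i * (genBinom (1/2) (n - i) * x ^ (n - i))
          = genBinom (1/2) i * genBinom (1/2) (n - i) * x ^ n
      rw [mul_mul_mul_comm, ← pow_add, Nat.add_sub_cancel' hi']
    rw [tsum_congr heq]
    have hsupp : ∀ n ∉ ({0, 1} : Finset ℕ), convT n * x ^ n = 0 := by
      intro n hn
      simp only [Finset.mem_insert, Finset.mem_singleton] at hn
      push_neg at hn
      rw [convT_ge_two n (by omega), zero_mul]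
    rw [tsum_eq_sum hsupp]
    simp [convT_zero, convT_one]
  -- nonnegativity of f
  have htail : Summable (fun k => genBinom (1/2) (k+1) * x ^ (k+1)) :=
    (summable_nat_add_iff 1).mpr hs
  have habstail : Summable (fun k => |genBinom (1/2) (k+1)|) :=
    (summable_nat_add_iff 1).mpr summable_abs_genBinom_half
  have hnorm1 : Summable (fun k : ℕ => ‖genBinom (1/2) (k+1) * x ^ (k+1)‖) :=
    (summable_nat_add_iff (f := fun k : ℕ => ‖genBinom (1/2) k * x ^ k‖) 1).mpr hnorm
  have hb1 : ‖∑' k : ℕ, genBinom (1/2) (k+1) * x ^ (k+1)‖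
      ≤ ∑' k : ℕ, ‖genBinom (1/2) (k+1) * x ^ (k+1)‖ := norm_tsum_le_tsum_norm hnorm1
  have hb2 : ∑' k : ℕ, ‖genBinom (1/2) (k+1) * x ^ (k+1)‖
      ≤ ∑' k : ℕ, |genBinom (1/2) (k+1)| :=
    Summable.tsum_le_tsum (fun k => hbound (k+1)) hnorm1 habstail
  have hb : |∑' k : ℕ, genBinom (1/2) (k+1) * x ^ (k+1)| ≤ 1 := by
    rw [← Real.norm_eq_abs]
    linarith [tsum_abs_genBinom_tail_le]
  have hfpos : 0 ≤ f := by
    rw [hf, Summable.tsum_eq_zero_add hs]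
    have h00 : genBinom (1/2) 0 * x ^ 0 = 1 := by rw [genBinom_zero, pow_zero, mul_one]
    rw [h00]
    have := abs_le.mp hb
    linarith [this.1]
  have hfval : f = Real.sqrt (1 + x) := by
    have : Real.sqrt (1 + x) = Real.sqrt (f ^ 2) := by rw [sq, hcauchy]
    rw [this, Real.sqrt_sq hfpos]
  rw [← hfval]
  exact hs.hasSum

section MatrixConj
variable {m : Type*} [Fintype m] [DecidableEq m]

lemma matConj_diag_apply (U : Matrix m m ℝ) (d : m → ℝ) (i : m) :
    (U * Matrix.diagonal d * star U) i i = ∑ j, d j * (U i j) ^ 2 := by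
  rw [Matrix.mul_apply]
  apply Finset.sum_congr rfl
  intro j _
  rw [Matrix.mul_diagonal, Matrix.star_apply, star_trivial]
  ring

lemma matConj_mul (U : Matrix m m ℝ) (hU : star U * U = 1) (d e : m → ℝ) :
    (U * Matrix.diagonal d * star U) * (U * Matrix.diagonal e * star U)
      = U * Matrix.diagonal (fun j => d j * e j) * star U := by
  have : U * Matrix.diagonal d * star U * (U * Matrix.diagonal e * star U)
      = U * (Matrix.diagonal d * (star U * U) * Matrix.diagonal e) * star U := by
    simp only [Matrix.mul_assoc]
  rw [this, hU, mul_one, Matrix.diagonal_mul_diagonal]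

lemma matConj_pow (U : Matrix m m ℝ) (hU : star U * U = 1) (hU' : U * star U = 1)
    (d : m → ℝ) (k : ℕ) :
    (U * Matrix.diagonal d * star U) ^ k
      = U * Matrix.diagonal (fun j => d j ^ k) * star U := by
  induction k with
  | zero =>
      rw [pow_zero, show (fun j => d j ^ 0) = fun _ : m => (1:ℝ) from funext fun j => pow_zero _,
        Matrix.diagonal_one, mul_one, hU']
  | succ k ih =>
      rw [pow_succ, ih, matConj_mul U hU]
      have : (fun j => d j ^ k * d j) = fun j => d j ^ (k+1) := funext fun j => (pow_succ _ _).symm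
      rw [this]

lemma matConj_psd (U : Matrix m m ℝ) (d : m → ℝ) (hd : ∀ j, 0 ≤ d j) :
    (U * Matrix.diagonal d * star U).PosSemidef := by
  have h := (Matrix.PosSemidef.diagonal (fun j => hd j) :
    (Matrix.diagonal d).PosSemidef).mul_mul_conjTranspose_same U
  rwa [← Matrix.star_eq_conjTranspose] at h

end MatrixConj

open scoped MatrixOrder in
lemma psd_eq_sqrt_of_sq_eq {n : Type*} [Fintype n] [DecidableEq n]
    {A B : Matrix n n ℝ} (hB : B.PosSemidef) (hA : A.PosSemidef) (h : B ^ 2 = A) :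
    B = hA.sqrt := by
  have h1 : hA.sqrt = CFC.sqrt A := by
    rw [CFC.sqrt_eq_cfc, cfc_nnreal_eq_real _ A hA.nonneg, hA.1.cfc_eq]
    simp only [IsHermitian.cfc, Matrix.PosSemidef.sqrt]
    congr 2
    congr 1
    funext j
    simp [max_eq_left (hA.eigenvalues_nonneg j)]
  rw [h1, CFC.sqrt_unique (by rw [← sq, h]) hB.nonneg]

section Randic
variable {V : Type*} [Fintype V] [DecidableEq V] (G : SimpleGraph V)

lemma randic_isHermitian : (randicMatrix G).IsHermitian := by
  ext i j
  simp only [randicMatrix, Matrix.conjTranspose_apply, Matrix.of_apply, star_trivial]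
  by_cases h : G.Adj j i
  · rw [if_pos h, if_pos (G.adj_symm h), mul_comm]
  · rw [if_neg h, if_neg (fun h' => h (G.adj_symm h'))]

omit [DecidableEq V] in
lemma randic_adj_sum_symm (f : V → V → ℝ) :
    ∑ a, ∑ b, (if G.Adj a b then f a b else 0)
      = ∑ a, ∑ b, (if G.Adj a b then f b a else 0) := by
  rw [Finset.sum_comm]
  apply Finset.sum_congr rfl
  intro a _
  apply Finset.sum_congr rfl
  intro b _
  exact if_congr (SimpleGraph.adj_comm G b a) rfl rfl

lemma randic_one_add_smul_posSemidef (ε : ℝ) (hε : ε = 1 ∨ ε = -1) :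
    ((1 : Matrix V V ℝ) + ε • randicMatrix G).PosSemidef := by
  have hε2 : ε ^ 2 = 1 := by rcases hε with h | h <;> rw [h] <;> norm_num
  refine Matrix.PosSemidef.of_dotProduct_mulVec_nonneg ?_ ?_
  · show ((1 : Matrix V V ℝ) + ε • randicMatrix G)ᴴ = _
    rw [Matrix.conjTranspose_add, Matrix.conjTranspose_smul, Matrix.conjTranspose_one,
      star_trivial, (randic_isHermitian G).eq]
  · intro x
    set w : V → ℝ := fun a => x a / Real.sqrt (G.degree a) with hw
    have hRx : x ⬝ᵥ (randicMatrix G *ᵥ x)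
        = ∑ a, ∑ b, (if G.Adj a b then w a * w b else 0) := by
      rw [dotProduct, Finset.sum_congr rfl (fun a _ => by rw [Matrix.mulVec, dotProduct,
        Finset.mul_sum])]
      apply Finset.sum_congr rfl
      intro a _
      apply Finset.sum_congr rfl
      intro b _
      by_cases h : G.Adj a b
      · rw [if_pos h]
        show x a * (randicMatrix G a b * x b) = w a * w b
        rw [show randicMatrix G a b
            = 1 / Real.sqrt ((G.degree a : ℝ) * (G.degree b : ℝ)) from by
          simp [randicMatrix, h]]
        rw [Real.sqrt_mul (by positivity)]
        simp only [hw, div_eq_mul_inv, one_mul, mul_inv]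
        ring
      · rw [if_neg h]
        rw [show randicMatrix G a b = 0 from by simp [randicMatrix, h]]
        ring
    have hx2 : (∑ a, ∑ b, (if G.Adj a b then w a ^ 2 else 0)) ≤ x ⬝ᵥ x := by
      rw [dotProduct]
      apply Finset.sum_le_sum
      intro a _
      have hsum : ∑ b, (if G.Adj a b then w a ^ 2 else 0) = (G.degree a : ℝ) * w a ^ 2 := by
        rw [← Finset.sum_filter, Finset.sum_const, nsmul_eq_mul]
        congr 2
        rw [SimpleGraph.degree, SimpleGraph.neighborFinset_eq_filter]
      rw [hsum]
      by_cases hd : G.degree a = 0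
      · rw [hd]
        push_cast
        rw [zero_mul]
        exact mul_self_nonneg _
      · have hdpos : (0:ℝ) < (G.degree a : ℝ) := by
          exact_mod_cast Nat.pos_of_ne_zero hd
        have : w a ^ 2 = x a ^ 2 / (G.degree a : ℝ) := by
          rw [hw, div_pow, Real.sq_sqrt hdpos.le]
        rw [this, mul_div_cancel₀ _ (ne_of_gt hdpos)]
        rw [sq]
    have hquad : 0 ≤ ∑ a, ∑ b, (if G.Adj a b then (w a + ε * w b) ^ 2 else 0) := by
      apply Finset.sum_nonneg
      intro a _
      apply Finset.sum_nonneg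
      intro b _
      by_cases h : G.Adj a b <;> simp [h, sq_nonneg]
    have hexp : ∑ a, ∑ b, (if G.Adj a b then (w a + ε * w b) ^ 2 else 0)
        = 2 * ((∑ a, ∑ b, (if G.Adj a b then w a ^ 2 else 0))
            + ε * ∑ a, ∑ b, (if G.Adj a b then w a * w b else 0)) := by
      have hsw := randic_adj_sum_symm G (fun a b => w a ^ 2)
      have hterm : ∀ a b : V, (if G.Adj a b then (w a + ε * w b) ^ 2 else 0)
          = (if G.Adj a b then w a ^ 2 else 0) + 2 * ε * (if G.Adj a b then w a * w b else 0)
            + (if G.Adj a b then w b ^ 2 else 0) := by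
        intro a b
        by_cases h : G.Adj a b
        · simp only [if_pos h]
          linear_combination (w b ^ 2) * hε2
        · simp [h]
      calc ∑ a, ∑ b, (if G.Adj a b then (w a + ε * w b) ^ 2 else 0)
          = (∑ a, ∑ b, (if G.Adj a b then w a ^ 2 else 0))
            + 2 * ε * (∑ a, ∑ b, (if G.Adj a b then w a * w b else 0))
            + ∑ a, ∑ b, (if G.Adj a b then w b ^ 2 else 0) := by
            simp only [hterm, Finset.sum_add_distrib, Finset.mul_sum]
        _ = _ := by rw [← hsw]; ring
    have hfinal : 0 ≤ x ⬝ᵥ x + ε * (x ⬝ᵥ (randicMatrix G *ᵥ x)) := by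
      rw [hRx]
      nlinarith [hquad, hexp, hx2]
    have hveq : star x ⬝ᵥ (((1 : Matrix V V ℝ) + ε • randicMatrix G) *ᵥ x)
        = x ⬝ᵥ x + ε * (x ⬝ᵥ (randicMatrix G *ᵥ x)) := by
      rw [Matrix.add_mulVec, Matrix.one_mulVec, Matrix.smul_mulVec, dotProduct_add,
        dotProduct_smul, smul_eq_mul, star_trivial]
    rw [hveq]
    exact hfinal

end Randic

/-- Series representation
`RE_G(v_i) = Σ_{k=0}^∞ C(1/2,k) ((R² − I)^k)_{ii}`. -/
theorem randic_vertex_energy_series {n : ℕ} (G : SimpleGraph (Fin n)) (hG : G.Connected)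
    (i : Fin n) :
    vertexRE G i = ∑' k : ℕ, genBinom (1 / 2) k * ((((randicMatrix G) ^ 2 - 1) ^ k : Matrix (Fin n) (Fin n) ℝ) i i) := by
  classical
  set R := randicMatrix G with hRdef
  have hR : R.IsHermitian := randic_isHermitian G
  set U : Matrix (Fin n) (Fin n) ℝ := (hR.eigenvectorUnitary : Matrix (Fin n) (Fin n) ℝ) with hUdef
  have hU2 : U * star U = 1 := Matrix.mem_unitaryGroup_iff.mp hR.eigenvectorUnitary.2
  have hU1 : star U * U = 1 := Matrix.mem_unitaryGroup_iff'.mp hR.eigenvectorUnitary.2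
  set μ : Fin n → ℝ := hR.eigenvalues with hμdef
  have hspec : R = U * Matrix.diagonal μ * star U := by
    have h := hR.spectral_theorem
    rwa [RCLike.ofReal_real_eq_id, Function.id_comp] at h
  have hμ2 : ∀ j, μ j ^ 2 ≤ 1 := by
    intro j
    have hv := hR.mulVec_eigenvectorBasis j
    set v : Fin n → ℝ := ⇑(hR.eigenvectorBasis j) with hvdef
    have hnv : v ⬝ᵥ v = 1 := by
      have h1 : ‖hR.eigenvectorBasis j‖ = 1 := hR.eigenvectorBasis.orthonormal.1 j
      rw [EuclideanSpace.norm_eq] at h1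
      have h3 := Real.sqrt_eq_one.mp h1
      have h2 : ∑ k, v k ^ 2 = 1 := by simpa [Real.norm_eq_abs, sq_abs] using h3
      simpa [dotProduct, sq] using h2
    have key : ∀ ε : ℝ, ε = 1 ∨ ε = -1 → 0 ≤ 1 + ε * μ j := by
      intro ε hε
      have hpsd := (randic_one_add_smul_posSemidef G ε hε).dotProduct_mulVec_nonneg v
      rw [star_trivial, Matrix.add_mulVec, Matrix.one_mulVec, Matrix.smul_mulVec,
        hv, dotProduct_add, dotProduct_smul, dotProduct_smul, smul_eq_mul, smul_eq_mul,
        hnv] at hpsd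
      linarith
    have h1 := key 1 (Or.inl rfl)
    have h2 := key (-1) (Or.inr rfl)
    nlinarith
  have hsq : R ^ 2 = U * Matrix.diagonal (fun j => μ j ^ 2) * star U := by
    rw [pow_two, hspec, matConj_mul U hU1,
      show (fun j => μ j * μ j) = fun j => μ j ^ 2 from funext fun j => (sq (μ j)).symm]
  have hdiagsub : Matrix.diagonal (fun j => μ j ^ 2) - Matrix.diagonal (fun _ : Fin n => (1:ℝ))
      = Matrix.diagonal (fun j => μ j ^ 2 - 1) := by
    ext a b
    by_cases hab : a = b <;> simp [Matrix.diagonal_apply, hab]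
  have hsub : R ^ 2 - 1 = U * Matrix.diagonal (fun j => μ j ^ 2 - 1) * star U := by
    have h1 : (1 : Matrix (Fin n) (Fin n) ℝ)
        = U * Matrix.diagonal (fun _ : Fin n => (1:ℝ)) * star U := by
      rw [Matrix.diagonal_one, mul_one, hU2]
    calc R ^ 2 - 1
        = U * Matrix.diagonal (fun j => μ j ^ 2) * star U
          - U * Matrix.diagonal (fun _ : Fin n => (1:ℝ)) * star U := by rw [← h1, hsq]
      _ = U * (Matrix.diagonal (fun j => μ j ^ 2)
            - Matrix.diagonal (fun _ : Fin n => (1:ℝ))) * star U := by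
          rw [Matrix.mul_sub, Matrix.sub_mul]
      _ = _ := by rw [hdiagsub]
  have hpow : ∀ k : ℕ, (R ^ 2 - 1) ^ k
      = U * Matrix.diagonal (fun j => (μ j ^ 2 - 1) ^ k) * star U := by
    intro k
    rw [hsub, matConj_pow U hU1 hU2]
  have habs : matAbs R = U * Matrix.diagonal (fun j => |μ j|) * star U := by
    have hpsdS := matConj_psd U (fun j => |μ j|) (fun j => abs_nonneg _)
    have hsq2 : (U * Matrix.diagonal (fun j => |μ j|) * star U) ^ 2 = R * Rᴴ := by
      rw [pow_two, matConj_mul U hU1,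
        show (fun j => |μ j| * |μ j|) = fun j => μ j ^ 2 from
          funext fun j => by rw [abs_mul_abs_self, sq],
        ← hsq, hR.eq, pow_two]
    exact (psd_eq_sqrt_of_sq_eq hpsdS (mulConjTranspose_posSemidef R) hsq2).symm
  have hLHS : vertexRE G i = ∑ j, |μ j| * (U i j) ^ 2 := by
    rw [show vertexRE G i = matAbs R i i from rfl, habs, matConj_diag_apply]
  have hterm : ∀ k : ℕ, genBinom (1/2) k * ((((R ^ 2 - 1) ^ k : Matrix (Fin n) (Fin n) ℝ)) i i)
      = ∑ j, genBinom (1/2) k * ((μ j ^ 2 - 1) ^ k * (U i j) ^ 2) := by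
    intro k
    rw [hpow k, matConj_diag_apply, Finset.mul_sum]
  have hjsum : ∀ j, HasSum (fun k => genBinom (1/2) k * ((μ j ^ 2 - 1) ^ k * (U i j) ^ 2))
      (|μ j| * (U i j) ^ 2) := by
    intro j
    have hb1 : (-1:ℝ) ≤ μ j ^ 2 - 1 := by nlinarith [sq_nonneg (μ j)]
    have hb0 : μ j ^ 2 - 1 ≤ 0 := by linarith [hμ2 j]
    have h := (hasSum_genBinom_half hb1 hb0).mul_right ((U i j) ^ 2)
    have hsq : Real.sqrt (1 + (μ j ^ 2 - 1)) = |μ j| := by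
      rw [show (1:ℝ) + (μ j ^ 2 - 1) = μ j ^ 2 by ring, Real.sqrt_sq_eq_abs]
    rw [hsq] at h
    simpa [mul_assoc] using h
  calc vertexRE G i = ∑ j, |μ j| * (U i j) ^ 2 := hLHS
    _ = ∑ j, ∑' k : ℕ, genBinom (1/2) k * ((μ j ^ 2 - 1) ^ k * (U i j) ^ 2) :=
        Finset.sum_congr rfl fun j _ => ((hjsum j).tsum_eq).symm
    _ = ∑' k : ℕ, ∑ j, genBinom (1/2) k * ((μ j ^ 2 - 1) ^ k * (U i j) ^ 2) :=
        (Summable.tsum_finsetSum fun j _ => (hjsum j).summable).symm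
    _ = ∑' k : ℕ, genBinom (1/2) k * ((((R ^ 2 - 1) ^ k : Matrix (Fin n) (Fin n) ℝ)) i i) :=
        tsum_congr fun k => (hterm k).symm
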